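/- Let A ∈ ℝ^{m×n} with rank n, b ∈ ℝ^m, and x* the solution of the normal equations AᵀA x = Aᵀ b. Let E ∈ ℝ^{m×n} with ε := ‖E‖/‖A‖, and suppose x̂ ≠ 0 satisfies (A+E)ᵀ(A+E) x̂ = (A+E)ᵀ b. Then ‖x* - x̂‖/‖x̂‖ ≤ κ(A)² · ε · ( ‖b - A x̂‖/(‖A‖‖x̂‖) + 1 + ε ). -/

import Mathlib

open Matrix
open scoped Matrix.Norms.L2Operator

/-- The `j`-th largest singular value of a real matrix. -/
noncomputable def sval {m n : ℕ} (M : Matrix (Fin m) (Fin n) ℝ) (j : Fin n) : ℝ :=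
  Real.sqrt ((((Finset.univ.val.map
    (show (Mᵀ * M).IsHermitian by
      simpa using Matrix.isHermitian_conjTranspose_mul_self M).eigenvalues).sort (· ≥ ·)).getD j 0))

/-- Two-norm condition number `σ₁ / σₙ`. -/
noncomputable def condNum {m n : ℕ} (M : Matrix (Fin m) (Fin (n+1)) ℝ) : ℝ :=
  sval M 0 / sval M (Fin.last n)

/-- Euclidean norm of a vector. -/
noncomputable def e2norm {k : ℕ} (x : Fin k → ℝ) : ℝ := Real.sqrt (∑ i, (x i)^2)

lemma e2norm_eq {k : ℕ} (x : Fin k → ℝ) :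
    e2norm x = ‖(EuclideanSpace.equiv (Fin k) ℝ).symm x‖ := by
  simp [e2norm, EuclideanSpace.norm_eq, Real.norm_eq_abs, sq_abs]

lemma e2norm_nonneg {k : ℕ} (x : Fin k → ℝ) : 0 ≤ e2norm x :=
  Real.sqrt_nonneg _

lemma e2norm_pos {k : ℕ} {x : Fin k → ℝ} (h : x ≠ 0) : 0 < e2norm x := by
  rw [e2norm_eq]
  exact norm_pos_iff.mpr (by
    have h' := (EuclideanSpace.equiv (Fin k) ℝ).symm.injective.ne h
    rwa [map_zero] at h')

lemma e2norm_add_le {k : ℕ} (x y : Fin k → ℝ) :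
    e2norm (x + y) ≤ e2norm x + e2norm y := by
  rw [e2norm_eq, e2norm_eq, e2norm_eq]
  exact norm_add_le ((EuclideanSpace.equiv (Fin k) ℝ).symm x)
    ((EuclideanSpace.equiv (Fin k) ℝ).symm y)

lemma e2norm_neg {k : ℕ} (x : Fin k → ℝ) : e2norm (-x) = e2norm x := by
  rw [e2norm_eq, e2norm_eq]
  exact norm_neg ((EuclideanSpace.equiv (Fin k) ℝ).symm x)

lemma e2norm_mulVec_le {k l : ℕ} (M : Matrix (Fin k) (Fin l) ℝ) (x : Fin l → ℝ) :
    e2norm (M *ᵥ x) ≤ ‖M‖ * e2norm x := by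
  rw [e2norm_eq, e2norm_eq]
  exact M.l2_opNorm_mulVec ((EuclideanSpace.equiv (Fin l) ℝ).symm x)

lemma norm_transpose_eq {k l : ℕ} (M : Matrix (Fin k) (Fin l) ℝ) : ‖Mᵀ‖ = ‖M‖ := by
  rw [← conjTranspose_eq_transpose_of_trivial]
  exact M.l2_opNorm_conjTranspose

theorem stmt5 {m n : ℕ} (A E : Matrix (Fin m) (Fin n) ℝ) (b : Fin m → ℝ)
    (xs xh : Fin n → ℝ) (hrank : A.rank = n)
    (hxs : (Aᵀ * A) *ᵥ xs = Aᵀ *ᵥ b)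
    (hxh : ((A + E)ᵀ * (A + E)) *ᵥ xh = (A + E)ᵀ *ᵥ b) (hne : xh ≠ 0)
    (ε κ : ℝ) (hε : ε = ‖E‖ / ‖A‖) (hκ : κ = ‖A‖ * ‖(Aᵀ * A)⁻¹ * Aᵀ‖) :
    e2norm (xs - xh) / e2norm xh ≤
      κ^2 * ε * (e2norm (b - A *ᵥ xh) / (‖A‖ * e2norm xh) + 1 + ε) := by
  -- n ≥ 1
  have hn : n ≠ 0 := by
    rintro rfl
    exact hne (funext fun i => i.elim0)
  -- A ≠ 0, ‖A‖ > 0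
  have hA0 : A ≠ 0 := by
    rintro rfl
    rw [Matrix.rank_zero] at hrank
    exact hn hrank.symm
  have ha : (0:ℝ) < ‖A‖ := norm_pos_iff.mpr hA0
  -- invertibility of G := Aᵀ * A
  set G := Aᵀ * A with hG
  have hkerA : LinearMap.ker A.mulVecLin = ⊥ := by
    have h1 := A.rank_transpose_mul_self
    have h2 := LinearMap.finrank_range_add_finrank_ker A.mulVecLin
    have h3 : Module.finrank ℝ (Fin n → ℝ) = n := by simp
    have h4 : A.rank = Module.finrank ℝ (LinearMap.range A.mulVecLin) := rfl
    have h5 : Module.finrank ℝ (LinearMap.ker A.mulVecLin) = 0 := by omega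
    exact Submodule.finrank_eq_zero.mp h5
  have hGunit : IsUnit G := by
    rw [← Matrix.mulVec_injective_iff_isUnit]
    have : LinearMap.ker G.mulVecLin = ⊥ := by
      rw [hG, Matrix.ker_mulVecLin_transpose_mul_self]
      exact hkerA
    have := LinearMap.ker_eq_bot.mp this
    exact this
  have hGdet : IsUnit G.det := (Matrix.isUnit_iff_isUnit_det G).mp hGunit
  have hGinv : G⁻¹ * G = 1 := Matrix.nonsing_inv_mul G hGdet
  have hGsymm : Gᵀ = G := by rw [hG, transpose_mul, transpose_transpose]
  -- pseudoinverse
  set P := G⁻¹ * Aᵀ with hP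
  have hPA : P * A = 1 := by rw [hP, Matrix.mul_assoc, ← hG, hGinv]
  have hPPt : P * Pᵀ = G⁻¹ := by
    rw [hP, transpose_mul, transpose_transpose, Matrix.transpose_nonsing_inv, hGsymm]
    calc G⁻¹ * Aᵀ * (A * G⁻¹) = G⁻¹ * G * G⁻¹ := by
          rw [Matrix.mul_assoc, ← Matrix.mul_assoc Aᵀ, ← hG, ← Matrix.mul_assoc]
      _ = G⁻¹ := by rw [hGinv, Matrix.one_mul]
  -- ‖1‖ = 1
  have hone : ‖(1 : Matrix (Fin n) (Fin n) ℝ)‖ = 1 := by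
    have h := Matrix.l2_opNorm_conjTranspose_mul_self (1 : Matrix (Fin n) (Fin n) ℝ)
    rw [conjTranspose_one, Matrix.one_mul] at h
    have h0 : ‖(1 : Matrix (Fin n) (Fin n) ℝ)‖ ≠ 0 := by
      intro h0
      have : (1 : Matrix (Fin n) (Fin n) ℝ) = 0 := norm_eq_zero.mp h0
      have := congrFun (congrFun this ⟨0, Nat.pos_of_ne_zero hn⟩) ⟨0, Nat.pos_of_ne_zero hn⟩
      simp at this
    exact mul_left_cancel₀ h0 (by rw [mul_one]; exact h.symm)
  have h1ap : 1 ≤ ‖A‖ * ‖P‖ := by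
    have := Matrix.l2_opNorm_mul P A
    rw [hPA, hone] at this
    linarith [this, mul_comm ‖P‖ ‖A‖]
  -- key identity
  have key : G *ᵥ (xs - xh) = Aᵀ *ᵥ (E *ᵥ xh) + Eᵀ *ᵥ ((A + E) *ᵥ xh - b) := by
    have h := hxh
    simp only [transpose_add, Matrix.add_mul, Matrix.mul_add, Matrix.add_mulVec,
      ← Matrix.mulVec_mulVec] at h
    have h2 : Aᵀ *ᵥ (A *ᵥ xs) = Aᵀ *ᵥ b := by
      simpa only [hG, ← Matrix.mulVec_mulVec] using hxs
    simp only [hG, Matrix.mulVec_sub, Matrix.mulVec_add, Matrix.add_mulVec,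
      ← Matrix.mulVec_mulVec]
    linear_combination h2 - h
  have hrepr : xs - xh = P *ᵥ (E *ᵥ xh) + (G⁻¹ * Eᵀ) *ᵥ ((A + E) *ᵥ xh - b) := by
    have h0 : xs - xh = G⁻¹ *ᵥ (G *ᵥ (xs - xh)) := by
      rw [Matrix.mulVec_mulVec, hGinv, Matrix.one_mulVec]
    rw [h0, key, Matrix.mulVec_add]
    simp only [Matrix.mulVec_mulVec, hP, Matrix.mul_assoc]
  -- norms
  set X := e2norm xh with hXdef
  have hX : (0:ℝ) < X := e2norm_pos hne
  set R := e2norm (b - A *ᵥ xh) with hRdef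
  have hR : (0:ℝ) ≤ R := e2norm_nonneg _
  have hEnn : (0:ℝ) ≤ ‖E‖ := norm_nonneg _
  have hPnn : (0:ℝ) ≤ ‖P‖ := norm_nonneg _
  -- residual bound
  have hv : e2norm ((A + E) *ᵥ xh - b) ≤ R + ‖E‖ * X := by
    have h1 : (A + E) *ᵥ xh - b = -(b - A *ᵥ xh) + E *ᵥ xh := by
      rw [Matrix.add_mulVec]; abel
    rw [h1]
    calc e2norm (-(b - A *ᵥ xh) + E *ᵥ xh)
        ≤ e2norm (-(b - A *ᵥ xh)) + e2norm (E *ᵥ xh) := e2norm_add_le _ _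
      _ ≤ R + ‖E‖ * X := by
          rw [e2norm_neg]
          exact add_le_add_right (e2norm_mulVec_le E xh) R
  have hGE : ‖G⁻¹ * Eᵀ‖ ≤ ‖P‖ * (‖P‖ * ‖E‖) := by
    have h1 : G⁻¹ * Eᵀ = P * (Pᵀ * Eᵀ) := by rw [← Matrix.mul_assoc, hPPt]
    rw [h1]
    calc ‖P * (Pᵀ * Eᵀ)‖ ≤ ‖P‖ * ‖Pᵀ * Eᵀ‖ := Matrix.l2_opNorm_mul _ _
      _ ≤ ‖P‖ * (‖Pᵀ‖ * ‖Eᵀ‖) := by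
          exact mul_le_mul_of_nonneg_left (Matrix.l2_opNorm_mul _ _) hPnn
      _ = ‖P‖ * (‖P‖ * ‖E‖) := by rw [norm_transpose_eq, norm_transpose_eq]
  -- main bound
  have hmain : e2norm (xs - xh) ≤ ‖P‖ * (‖E‖ * X) + ‖P‖ * (‖P‖ * ‖E‖) * (R + ‖E‖ * X) := by
    rw [hrepr]
    calc e2norm (P *ᵥ (E *ᵥ xh) + (G⁻¹ * Eᵀ) *ᵥ ((A + E) *ᵥ xh - b))
        ≤ e2norm (P *ᵥ (E *ᵥ xh)) + e2norm ((G⁻¹ * Eᵀ) *ᵥ ((A + E) *ᵥ xh - b)) :=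
          e2norm_add_le _ _
      _ ≤ ‖P‖ * (‖E‖ * X) + ‖P‖ * (‖P‖ * ‖E‖) * (R + ‖E‖ * X) := by
          gcongr
          · calc e2norm (P *ᵥ (E *ᵥ xh)) ≤ ‖P‖ * e2norm (E *ᵥ xh) := e2norm_mulVec_le _ _
              _ ≤ ‖P‖ * (‖E‖ * X) :=
                mul_le_mul_of_nonneg_left (e2norm_mulVec_le _ _) hPnn
          · calc e2norm ((G⁻¹ * Eᵀ) *ᵥ ((A + E) *ᵥ xh - b))
                ≤ ‖G⁻¹ * Eᵀ‖ * e2norm ((A + E) *ᵥ xh - b) := e2norm_mulVec_le _ _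
              _ ≤ ‖P‖ * (‖P‖ * ‖E‖) * (R + ‖E‖ * X) := by
                  apply mul_le_mul hGE hv (e2norm_nonneg _)
                  positivity
  -- final arithmetic
  subst hε hκ
  rw [div_le_iff₀ hX]
  have hRHS : (‖A‖ * ‖P‖)^2 * (‖E‖ / ‖A‖) * (R / (‖A‖ * X) + 1 + ‖E‖ / ‖A‖) * X
      = ‖P‖^2 * ‖E‖ * R + ‖A‖ * ‖P‖^2 * ‖E‖ * X + ‖P‖^2 * ‖E‖^2 * X := by
    field_simp
  rw [hRHS]
  nlinarith [mul_le_mul_of_nonneg_right h1ap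
    (by positivity : (0:ℝ) ≤ ‖P‖ * ‖E‖ * X), hmain, hX, hR, hEnn, hPnn]
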